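/- arXiv:2202.13591 — 6 statements merged into one kernel-verified Lean document; each statement's English description precedes it below -/
import Mathlib

section
/- For any finite string T over an alphabet Σ of size σ, the number of minimal absent words for T of the form a^k (a single character repeated, i.e., RLE size 1) equals σ. Specifically, for each character a occurring in T, the string a^{p+1} where p is the length of the longest maximal run of a in T is the unique such MAW, and each character not occurring in T is itself such a MAW. -/
/-- `w` occurs in `T` iff `w` is a (contiguous) substring, i.e. infix, of `T`. -/
def IsMAW {α : Type*} [DecidableEq α] (w T : List α) : Prop :=
  w ≠ [] ∧ ¬ w <:+: T ∧ ∀ v : List α, v <:+: w → v ≠ w → v <:+: T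

/-- RLE size: the number of maximal runs of equal characters. -/
def rleSize {α : Type*} [DecidableEq α] (w : List α) : ℕ :=
  (w.destutter (· ≠ ·)).length

/-- A bridge: length ≥ 2, first two characters differ, last two characters differ. -/
def IsBridge {α : Type*} (w : List α) : Prop :=
  2 ≤ w.length ∧ w[0]? ≠ w[1]? ∧ w[w.length - 2]? ≠ w[w.length - 1]?

/-- Truncate the first run to exponent 1. -/
def truncHead {α : Type*} [DecidableEq α] : List α → List α
  | [] => []
  | a :: t => a :: t.dropWhile (· == a)

/-- Remove the first run completely. -/
def dropHeadRun {α : Type*} [DecidableEq α] : List α → List α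
  | [] => []
  | a :: t => (a :: t).dropWhile (· == a)

/-- Remove the first run and truncate the new first run to exponent 1. -/
def leftReduce {α : Type*} [DecidableEq α] (w : List α) : List α :=
  truncHead (dropHeadRun w)

/-- `bridgeReduce w = w^{(1)}`: remove the first and last runs and truncate the
new outer runs to exponent 1; the empty string if `R(w) ≤ 2`. -/
def bridgeReduce {α : Type*} [DecidableEq α] (w : List α) : List α :=
  if rleSize w ≤ 2 then [] else (leftReduce ((leftReduce w).reverse)).reverse


instance {α : Type*} [DecidableEq α] : DecidablePred (IsBridge (α := α)) := fun w => by
  unfold IsBridge; infer_instance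

/-- Number of occurrences of `w` in `T`. -/
def countOcc {α : Type*} [DecidableEq α] (w T : List α) : ℕ :=
  ((List.range (T.length + 1)).filter
    (fun i => decide ((T.drop i).take w.length = w ∧ i + w.length ≤ T.length))).length

/-- `K(w)`: the set of bridge substrings `z` of `T` with `z^{(1)} = w`, as a `Finset`. -/
def KFin {α : Type*} [DecidableEq α] (T w : List α) : Finset (List α) :=
  T.sublists.toFinset.filter (fun z => z <:+: T ∧ IsBridge z ∧ bridgeReduce z = w)

/-- `K₊(w) = { z ∈ K(w) : |K(z)| ≥ 2 }`. -/
def KplusFin {α : Type*} [DecidableEq α] (T w : List α) : Finset (List α) :=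
  (KFin T w).filter (fun z => 2 ≤ (KFin T z).card)

/-- `K^{(t)}(w)`: bridge substrings `z` of `T` with `z^{(t)} = w`. -/
def KIter {α : Type*} [DecidableEq α] (T w : List α) (t : ℕ) : Finset (List α) :=
  T.sublists.toFinset.filter (fun z => z <:+: T ∧ IsBridge z ∧ bridgeReduce^[t] z = w)

/-- `K₊^{(t)}(w) = { z ∈ K^{(t)}(w) : |K(z)| ≥ 2 }`. -/
def KplusIter {α : Type*} [DecidableEq α] (T w : List α) (t : ℕ) : Finset (List α) :=
  (KIter T w t).filter (fun z => 2 ≤ (KFin T z).card)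

/-- `K(w)` as a set. -/
def KSet {α : Type*} [DecidableEq α] (T w : List α) : Set (List α) :=
  {z | z <:+: T ∧ IsBridge z ∧ bridgeReduce z = w}

/-- Type-3 MAW: a MAW `a u b` with `R = 3`, `a ≠ u[1]`, `b ≠ u[|u|]`. -/
def IsType3MAW {α : Type*} [DecidableEq α] (w T : List α) : Prop :=
  IsMAW w T ∧ rleSize w = 3 ∧
    ∃ (a b : α) (u : List α), u ≠ [] ∧ w = a :: u ++ [b] ∧
      u.head? ≠ some a ∧ u.getLast? ≠ some b

/-- Type-4 MAW: a MAW `a u b` with `R ≥ 4`, `a ≠ u[1]`, `b ≠ u[|u|]`. -/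
def IsType4MAW {α : Type*} [DecidableEq α] (w T : List α) : Prop :=
  IsMAW w T ∧ 4 ≤ rleSize w ∧
    ∃ (a b : α) (u : List α), u ≠ [] ∧ w = a :: u ++ [b] ∧
      u.head? ≠ some a ∧ u.getLast? ≠ some b

/-- Type-5 MAW: a MAW `a u b` with `R ≥ 2` and `a = u[1]` or `b = u[|u|]`. -/
def IsType5MAW {α : Type*} [DecidableEq α] (w T : List α) : Prop :=
  IsMAW w T ∧ 2 ≤ rleSize w ∧
    ∃ (a b : α) (u : List α), u ≠ [] ∧ w = a :: u ++ [b] ∧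
      (u.head? = some a ∨ u.getLast? = some b)

/-- The exponent of the longest maximal run of `a` in `T`. -/
noncomputable def maxRunLen {α : Type*} [DecidableEq α] (a : α) (T : List α) : ℕ :=
  sSup {q : ℕ | List.replicate q a <:+: T}

/-- `w` occurs in `T` starting at position `k` (0-based). -/
def OccursAt {α : Type*} [DecidableEq α] (w T : List α) (k : ℕ) : Prop :=
  k + w.length ≤ T.length ∧ (T.drop k).take w.length = w


/-!
The proper factors of `a^k` are the powers `a^j` with `j < k`, and `a^j` occurs in `T` exactly
when `j` is at most the length `p` of the longest run of `a` in `T`. Hence `a^k` is a minimal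
absent word iff `k = p + 1`. Since the strings of RLE size one are the nonempty powers of a single
character, `a ↦ a^(p + 1)` is a bijection from the alphabet onto the MAWs of RLE size one; a
character not in `T` has `p = 0`.
-/

open List Function

section
variable {α : Type*}

theorem List.replicate_infix_replicate_iff {j k : ℕ} (a : α) :
    replicate j a <:+: replicate k a ↔ j ≤ k := by
  simp [infix_replicate_iff]

theorem bddAbove_replicate_infix (a : α) (T : List α) :
    BddAbove {q | replicate q a <:+: T} :=
  ⟨T.length, fun q hq => by simpa using hq.length_le⟩

variable [DecidableEq α]

theorem length_destutter'_ne_eq_one_iff (a : α) (l : List α) :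
    (l.destutter' (· ≠ ·) a).length = 1 ↔ ∀ b ∈ l, b = a := by
  induction l with
  | nil => simp
  | cons b t ih =>
    by_cases hba : b = a
    · subst hba
      rw [destutter'_cons_neg _ (by simp), ih]
      simp
    · rw [destutter'_cons_pos _ (Ne.symm hba)]
      simpa [hba] using destutter'_ne_nil (l := t) (R := (· ≠ ·)) (a := b)

theorem rleSize_eq_one_iff {w : List α} :
    rleSize w = 1 ↔ ∃ a n, w = replicate (n + 1) a := by
  cases w with
  | nil => simp [rleSize]
  | cons a t =>
    simp only [rleSize, destutter_cons', length_destutter'_ne_eq_one_iff, replicate_succ,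
      cons.injEq]
    constructor
    · exact fun h => ⟨a, t.length, rfl, eq_replicate_iff.2 ⟨rfl, h⟩⟩
    · rintro ⟨b, n, rfl, rfl⟩ c hc
      exact eq_of_mem_replicate hc

end

section MaxRun
variable {α : Type*} [DecidableEq α] (a : α) (T : List α)

theorem replicate_maxRunLen_infix : replicate (maxRunLen a T) a <:+: T :=
  Nat.sSup_mem ⟨0, nil_infix⟩ (bddAbove_replicate_infix a T)

variable {a T}

theorem replicate_infix_iff_le_maxRunLen {q : ℕ} :
    replicate q a <:+: T ↔ q ≤ maxRunLen a T :=
  ⟨fun h => le_csSup (bddAbove_replicate_infix a T) h,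
   fun h => ((replicate_infix_replicate_iff a).2 h).trans (replicate_maxRunLen_infix a T)⟩

theorem maxRunLen_eq_zero_of_not_mem (h : a ∉ T) : maxRunLen a T = 0 := by
  by_contra h0
  have : replicate 1 a <:+: T := replicate_infix_iff_le_maxRunLen.2 (by omega)
  exact h (this.subset (by simp))

theorem isMAW_replicate_iff {k : ℕ} : IsMAW (replicate k a) T ↔ k = maxRunLen a T + 1 := by
  simp only [IsMAW, ne_eq, replicate_eq_nil_iff, replicate_infix_iff_le_maxRunLen, not_le]
  constructor
  · rintro ⟨-, hk, hfactors⟩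
    have : replicate (k - 1) a <:+: T := by
      refine hfactors _ ((replicate_infix_replicate_iff a).2 (by omega)) ?_
      simp only [replicate_inj, or_true, and_true]
      omega
    have := replicate_infix_iff_le_maxRunLen.1 this
    omega
  · rintro rfl
    refine ⟨by omega, by omega, fun v hv hne => ?_⟩
    obtain ⟨hlen, hv⟩ := infix_replicate_iff.1 hv
    rw [hv, replicate_infix_iff_le_maxRunLen]
    by_contra hgt
    exact hne (by rw [hv]; congr 1; omega)

theorem setOf_isMAW_rleSize_eq_one :
    {w | IsMAW w T ∧ rleSize w = 1} = Set.range fun a => replicate (maxRunLen a T + 1) a := by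
  ext w
  simp only [Set.mem_ofPred_eq, Set.mem_range, rleSize_eq_one_iff]
  constructor
  · rintro ⟨hw, a, n, rfl⟩
    exact ⟨a, by rw [isMAW_replicate_iff.1 hw]⟩
  · rintro ⟨a, rfl⟩
    exact ⟨isMAW_replicate_iff.2 rfl, a, _, rfl⟩

end MaxRun

theorem stmt0 {α : Type*} [Fintype α] [DecidableEq α] (T : List α) :
    ({w : List α | IsMAW w T ∧ rleSize w = 1}.ncard = Fintype.card α) ∧
    (∀ a : α, a ∈ T →
      ∀ w : List α,
        (IsMAW w T ∧ ∃ k : ℕ, w = List.replicate k a) ↔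
          w = List.replicate (maxRunLen a T + 1) a) ∧
    (∀ a : α, a ∉ T → IsMAW [a] T) := by
  have hinj : Injective fun a : α => replicate (maxRunLen a T + 1) a := fun a b h => by
    simpa [replicate_succ] using congrArg head? h
  refine ⟨?_, fun a _ w => ⟨?_, ?_⟩, fun a ha => ?_⟩
  · rw [setOf_isMAW_rleSize_eq_one, Set.ncard_range_of_injective hinj, Nat.card_eq_fintype_card]
  · rintro ⟨hw, k, rfl⟩
    rw [isMAW_replicate_iff.1 hw]
  · rintro rfl
    exact ⟨isMAW_replicate_iff.2 rfl, _, rfl⟩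
  · have := maxRunLen_eq_zero_of_not_mem ha
    simpa using (isMAW_replicate_iff (k := 1)).2 (by omega)
end

section
/- For every n ≥ 4 there exists a string T of length n whose RLE size is 3 and which has exactly n−3 minimal absent words of RLE size 3 whose first character differs from its second character and whose last character differs from its second-to-last character. Consequently, the number of such type-3 MAWs cannot be bounded by any function of the RLE size of T. -/
/-! In `a cᵏ b` the letters `a` and `b` occur only at the ends. Hence if `x u y` is a type-3 MAW of
`T = a cᵐ b`, its proper factors `x u` and `u y` occurring in `T` force `u` to consist of `c`s, and
then `x ≠ c`, `y ≠ c` force `x = a`, `y = b`. Conversely `a cᵏ b` with `0 < k < m` is absent from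
`T`, while its two maximal proper factors `a cᵏ` and `cᵏ b` occur in it. So the type-3 MAWs of
`a cᵐ b` are exactly the `m - 1` words `a cᵏ b` with `0 < k < m`. -/

namespace List

variable {α : Type*}

theorem infix_of_cons_infix_cons {x y : α} {l t : List α} (h : x :: l <:+: y :: t) :
    l <:+: t := by
  rcases infix_cons_iff.1 h with h | h
  · exact (cons_prefix_cons.1 h).2.isInfix
  · exact (suffix_cons x l).isInfix.trans h

theorem infix_of_concat_infix_concat {x y : α} {l t : List α} (h : l ++ [x] <:+: t ++ [y]) :
    l <:+: t := by
  rw [← reverse_infix] at h ⊢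
  simp only [reverse_append, reverse_singleton, singleton_append] at h
  exact infix_of_cons_infix_cons h

theorem infix_dropLast_or_infix_tail {v w : List α} (h : v <:+: w) (hne : v ≠ w) :
    v <:+: w.dropLast ∨ v <:+: w.tail := by
  obtain ⟨s, t, rfl⟩ := h
  rcases t.eq_nil_or_concat with rfl | ⟨t, z, rfl⟩
  · rcases s with _ | ⟨z, s⟩
    · simp at hne
    · exact Or.inr ⟨s, [], by simp⟩
  · exact Or.inl ⟨s, t, by simp [← append_assoc]⟩

theorem destutter'_replicate_append [DecidableEq α] (x : α) (l : List α) (j : ℕ) :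
    (replicate j x ++ l).destutter' (· ≠ ·) x = l.destutter' (· ≠ ·) x := by
  induction j with
  | zero => rfl
  | succ j ih => simpa [replicate_succ, destutter'_cons] using ih

end List

open List

section Sandwich

variable {α : Type*} {a b c : α}

def sandwich (a c b : α) (k : ℕ) : List α :=
  a :: (replicate k c ++ [b])

theorem sandwich_injective : Function.Injective (sandwich a c b) := fun k m h => by
  simpa [sandwich] using congrArg length h

theorem sandwich_eq_append (a c b : α) (k : ℕ) :
    sandwich a c b k = (a :: replicate k c) ++ [b] := rfl

theorem sandwich_dropLast_infix {k m : ℕ} (hkm : k ≤ m) :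
    (sandwich a c b k).dropLast <:+: sandwich a c b m := by
  rw [sandwich_eq_append, dropLast_concat]
  refine IsPrefix.isInfix ⟨replicate (m - k) c ++ [b], ?_⟩
  rw [sandwich, cons_append, ← append_assoc, ← replicate_add, Nat.add_sub_cancel' hkm]

theorem sandwich_tail_infix {k m : ℕ} (hkm : k ≤ m) :
    (sandwich a c b k).tail <:+: sandwich a c b m := by
  refine IsSuffix.isInfix ⟨a :: replicate (m - k) c, ?_⟩
  rw [sandwich, tail_cons, cons_append, ← append_assoc, ← replicate_add, Nat.sub_add_cancel hkm]
  rfl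

theorem not_sandwich_infix_of_lt (hac : a ≠ c) (hab : a ≠ b) (hcb : c ≠ b) {k m : ℕ}
    (hkm : k < m) : ¬ sandwich a c b k <:+: sandwich a c b m := by
  intro h
  rcases infix_cons_iff.1 h with h | h
  · obtain ⟨j, rfl⟩ : ∃ j, m = k + (j + 1) := ⟨m - k - 1, by omega⟩
    have h := (cons_prefix_cons.1 h).2
    rw [replicate_add, append_assoc, prefix_append_right_inj] at h
    simp [replicate_succ, hcb.symm] at h
  · have ha := h.mem mem_cons_self
    simp [mem_replicate, hac, hab] at ha

variable [DecidableEq α]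

theorem rleSize_sandwich (hac : a ≠ c) (hcb : c ≠ b) {k : ℕ} (hk : 0 < k) :
    rleSize (sandwich a c b k) = 3 := by
  obtain ⟨j, rfl⟩ := Nat.exists_eq_add_of_lt hk
  simp [rleSize, sandwich, replicate_succ, destutter, hac, hcb, destutter'_replicate_append]

theorem isType3MAW_sandwich (hac : a ≠ c) (hab : a ≠ b) (hcb : c ≠ b) {k m : ℕ} (hk : 0 < k)
    (hkm : k < m) : IsType3MAW (sandwich a c b k) (sandwich a c b m) := by
  refine ⟨⟨cons_ne_nil _ _, not_sandwich_infix_of_lt hac hab hcb hkm, fun v hv hne => ?_⟩,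
    rleSize_sandwich hac hcb hk, a, b, replicate k c, by simp [hk.ne'], rfl, ?_, ?_⟩
  · rcases infix_dropLast_or_infix_tail hv hne with h | h
    · exact h.trans (sandwich_dropLast_infix hkm.le)
    · exact h.trans (sandwich_tail_infix hkm.le)
  · simp [head?_replicate, hk.ne', hac.symm]
  · simp [getLast?_replicate, hk.ne', hcb]

theorem exists_eq_sandwich_of_isType3MAW (hac : a ≠ c) (hab : a ≠ b) (hcb : c ≠ b) {m : ℕ}
    {w : List α} (h : IsType3MAW w (sandwich a c b m)) :
    ∃ k, 0 < k ∧ k < m ∧ w = sandwich a c b k := by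
  obtain ⟨⟨-, habsent, hfactor⟩, -, x, y, u, hu, rfl, hx, hy⟩ := h
  have hxu : x :: u <:+: sandwich a c b m :=
    hfactor _ (prefix_append _ _).isInfix (by simp)
  have huy : u ++ [y] <:+: sandwich a c b m :=
    hfactor _ ⟨[x], [], by simp⟩ (by simp)
  obtain ⟨k, rfl⟩ : ∃ k, u = replicate k c := by
    refine ⟨u.length, eq_replicate_iff.2 ⟨rfl, fun z hz => ?_⟩⟩
    have hz₁ := (infix_of_cons_infix_cons hxu).mem hz
    have hz₂ := (infix_of_concat_infix_concat (sandwich_eq_append a c b m ▸ huy)).mem hz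
    simp only [mem_append, mem_cons, mem_replicate] at hz₁ hz₂
    grind
  obtain ⟨j, rfl⟩ : ∃ j, k = j + 1 := Nat.exists_eq_succ_of_ne_zero (by simpa using hu)
  have hxa : x = a := by
    rw [replicate_succ', ← cons_append, sandwich_eq_append] at hxu
    have hx_mem := (infix_of_concat_infix_concat hxu).mem mem_cons_self
    simp only [mem_cons, mem_replicate] at hx_mem
    grind [head?_replicate]
  have hyb : y = b := by
    rw [replicate_succ, cons_append, sandwich] at huy
    have hy_mem := (infix_of_cons_infix_cons huy).mem (mem_concat_self ..)
    simp only [mem_append, mem_replicate, mem_singleton] at hy_mem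
    grind [getLast?_replicate]
  subst hxa hyb
  refine ⟨j + 1, j.succ_pos, lt_of_le_of_ne ?_ ?_, rfl⟩
  · simpa [sandwich, hcb, hac] using huy.count_le c
  · rintro rfl
    exact habsent (infix_refl _)

theorem setOf_isType3MAW_sandwich (hac : a ≠ c) (hab : a ≠ b) (hcb : c ≠ b) (m : ℕ) :
    {w | IsType3MAW w (sandwich a c b m)} = sandwich a c b '' Set.Ioo 0 m := by
  ext w
  constructor
  · intro h
    obtain ⟨k, hk, hkm, rfl⟩ := exists_eq_sandwich_of_isType3MAW hac hab hcb h
    exact ⟨k, ⟨hk, hkm⟩, rfl⟩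
  · rintro ⟨k, ⟨hk, hkm⟩, rfl⟩
    exact isType3MAW_sandwich hac hab hcb hk hkm

theorem ncard_setOf_isType3MAW_sandwich (hac : a ≠ c) (hab : a ≠ b) (hcb : c ≠ b) (m : ℕ) :
    {w | IsType3MAW w (sandwich a c b m)}.ncard = m - 1 := by
  rw [setOf_isType3MAW_sandwich hac hab hcb, Set.ncard_image_of_injective _ sandwich_injective,
    ← Finset.coe_Ioo, Set.ncard_coe_finset, Nat.card_Ioo, Nat.sub_zero]

end Sandwich

theorem stmt2 (n : ℕ) (hn : 4 ≤ n) :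
    ∃ T : List ℕ, T.length = n ∧ rleSize T = 3 ∧
      {w : List ℕ | IsType3MAW w T}.ncard = n - 3 := by
  refine ⟨sandwich 0 1 2 (n - 2), ?_, rleSize_sandwich (by decide) (by decide) (by omega), ?_⟩
  · simp only [sandwich, length_cons, length_append, length_replicate, length_nil]
    omega
  · rw [ncard_setOf_isType3MAW_sandwich (by decide) (by decide) (by decide)]
    omega
end

section
/- Let T be a string and define, for a bridge w and t ≥ 1, K^{(t)}(w) = { bridge substrings w' of T : w'^{(t)} = w } and K₊^{(t)}(w) = { w' ∈ K^{(t)}(w) : |K(w')| ≥ 2 }. Then for any bridge w with |K(w)| ≥ 2 and any t ≥ 1: |K(w)| + Σ_{i=1}^{t} Σ_{z ∈ K₊^{(i)}(w)} |K(z)| ≤ #w + Σ_{i=1}^{t} |K₊^{(i)}(w)|. -/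
/-!
Every `z ∈ K(w)` has the form `c a^e w b^f d` with `c ≠ a` and `d ≠ b`, where `a` and `b` are the
first and last letters of `w`. Hence an occurrence of `z` yields an occurrence of `w`, and since
`a^e` and `b^f` are maximal runs around it, distinct occurrences of members of `K(w)` yield distinct
occurrences of `w`: `∑_{z ∈ K(w)} #z ≤ #w`. As `K^{(i+1)}(w)` is the disjoint union of the
`K^{(i)}(z)` over `z ∈ K(w)`, the inequality then follows by induction on `t`, one child `z` at a
time.
-/

section Runs

variable {α : Type*}

def FirstRunLengthOne (l : List α) : Prop :=
  l[0]? ≠ l[1]?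

theorem firstRunLengthOne_cons {a : α} {m : List α} :
    FirstRunLengthOne (a :: m) ↔ m.head? ≠ some a := by
  cases m <;> simp [FirstRunLengthOne, eq_comm]

theorem FirstRunLengthOne.of_append {p q : List α} (hp : 2 ≤ p.length)
    (h : FirstRunLengthOne (p ++ q)) : FirstRunLengthOne p := by
  rwa [FirstRunLengthOne, List.getElem?_append_left (by omega),
    List.getElem?_append_left (by omega)] at h

theorem isBridge_iff {w : List α} :
    IsBridge w ↔ 2 ≤ w.length ∧ FirstRunLengthOne w ∧ FirstRunLengthOne w.reverse := by
  refine and_congr_right fun hw => and_congr_right fun _ => ?_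
  rw [FirstRunLengthOne, List.getElem?_reverse (by omega), List.getElem?_reverse (by omega),
    Nat.sub_zero, show w.length - 1 - 1 = w.length - 2 by omega, ne_comm]

theorem takeWhile_replicate_append {a : α} [BEq α] [LawfulBEq α] {l : List α}
    (hl : l.head? ≠ some a) (e : ℕ) :
    (List.replicate e a ++ l).takeWhile (· == a) = List.replicate e a := by
  rw [List.takeWhile_append_of_pos (by simp [List.mem_replicate])]
  cases l <;> simp_all

theorem replicate_append_cons_inj {b d₁ d₂ : α} {B₁ B₂ : List α} (hd₁ : d₁ ≠ b) (hd₂ : d₂ ≠ b) :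
    ∀ {f₁ f₂ : ℕ}, List.replicate f₁ b ++ d₁ :: B₁ = List.replicate f₂ b ++ d₂ :: B₂ →
      f₁ = f₂ ∧ d₁ = d₂ ∧ B₁ = B₂
  | 0, 0, h => by simp_all
  | 0, _ + 1, h => absurd (List.cons.inj h).1 hd₁
  | _ + 1, 0, h => absurd (List.cons.inj h).1.symm hd₂
  | _ + 1, _ + 1, h => by
    obtain ⟨hf, hd, hB⟩ := replicate_append_cons_inj hd₁ hd₂ (List.cons.inj h).2
    exact ⟨by rw [hf], hd, hB⟩

theorem eq_of_append_replicate_append_eq {A₁ A₂ B₁ B₂ w : List α} {a b c₁ c₂ d₁ d₂ : α}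
    {e₁ e₂ f₁ f₂ : ℕ} (hc₁ : c₁ ≠ a) (hc₂ : c₂ ≠ a) (hd₁ : d₁ ≠ b) (hd₂ : d₂ ≠ b)
    (hlen : A₁.length + e₁ = A₂.length + e₂)
    (h : (A₁ ++ c₁ :: List.replicate e₁ a) ++ (w ++ (List.replicate f₁ b ++ d₁ :: B₁)) =
      (A₂ ++ c₂ :: List.replicate e₂ a) ++ (w ++ (List.replicate f₂ b ++ d₂ :: B₂))) :
    A₁ = A₂ ∧ c₁ = c₂ ∧ e₁ = e₂ ∧ f₁ = f₂ ∧ d₁ = d₂ := by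
  obtain ⟨hpre, hsuf⟩ := List.append_inj h (by simp; omega)
  have hpre_rev := congrArg List.reverse hpre
  simp only [List.reverse_append, List.reverse_cons, List.reverse_replicate,
    List.append_assoc, List.singleton_append] at hpre_rev
  obtain ⟨he, hc, hA⟩ := replicate_append_cons_inj hc₁ hc₂ hpre_rev
  obtain ⟨hf, hd, -⟩ := replicate_append_cons_inj hd₁ hd₂ (List.append_cancel_left hsuf)
  exact ⟨List.reverse_injective hA, hc, he, hf, hd⟩

end Runs

section Reduction

variable {α : Type*} [DecidableEq α]

theorem truncHead_cons_eq (a : α) (u : List α) :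
    ∃ e m, truncHead (a :: u) = a :: m ∧ u = List.replicate e a ++ m ∧ m.head? ≠ some a := by
  refine ⟨(u.takeWhile (· == a)).length, u.dropWhile (· == a), rfl, ?_, fun h => ?_⟩
  · conv_lhs => rw [← List.takeWhile_append_dropWhile (p := (· == a)) (l := u)]
    congr 1
    exact List.eq_replicate_of_mem fun b hb => by simpa using List.mem_takeWhile_imp hb
  · have := List.head?_dropWhile_not (· == a) u
    simp [h] at this

theorem leftReduce_spec {s : List α} (hs : FirstRunLengthOne s) (hlen : 2 ≤ s.length) :
    ∃ c a e m, s = c :: (List.replicate e a ++ a :: m) ∧ leftReduce s = a :: m ∧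
      c ≠ a ∧ m.head? ≠ some a := by
  obtain ⟨c, a, u, rfl⟩ : ∃ c a u, s = c :: a :: u := by
    match s, hlen with
    | c :: a :: u, _ => exact ⟨c, a, u, rfl⟩
  have hca : c ≠ a := by simpa [FirstRunLengthOne] using hs
  obtain ⟨e, m, htrunc, rfl, hm⟩ := truncHead_cons_eq a u
  refine ⟨c, a, e, m, ?_, ?_, hca, hm⟩
  · rw [← List.cons_append, ← List.replicate_succ, List.replicate_succ', List.append_assoc,
      List.singleton_append]
  · rw [← htrunc, leftReduce, dropHeadRun, List.dropWhile_cons_of_pos (by simp),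
      List.dropWhile_cons_of_neg (by simpa using hca.symm)]

theorem two_le_length_of_bridgeReduce_ne_nil {y : List α} (h : bridgeReduce y ≠ []) :
    2 ≤ y.length := by
  have hR : ¬ rleSize y ≤ 2 := fun hR => h (if_pos hR)
  have := (List.destutter_sublist (· ≠ ·) y).length_le
  rw [rleSize] at hR
  omega

theorem bridgeReduce_decomp {z : List α} (hz : IsBridge z) (hlen : 2 ≤ (bridgeReduce z).length) :
    ∃ (a b c d : α) (e f : ℕ), (bridgeReduce z).head? = some a ∧
      (bridgeReduce z).getLast? = some b ∧ c ≠ a ∧ d ≠ b ∧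
      z = c :: (List.replicate e a ++ bridgeReduce z ++ (List.replicate f b ++ [d])) ∧
      IsBridge (bridgeReduce z) := by
  have hR : ¬ rleSize z ≤ 2 := fun hR => by simp [bridgeReduce, hR] at hlen
  obtain ⟨hz2, hzh, hzl⟩ := isBridge_iff.1 hz
  obtain ⟨c, a, e, m, hz, hL, hca, ham⟩ := leftReduce_spec hzh hz2
  have hm : m ≠ [] := by
    rintro rfl
    rw [bridgeReduce, if_neg hR, hL] at hlen
    simp [leftReduce, dropHeadRun, truncHead] at hlen
  have hLrev : FirstRunLengthOne (a :: m).reverse := by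
    refine .of_append (q := (List.replicate e a).reverse ++ [c])
      (by simp [Nat.one_le_iff_ne_zero, hm]) ?_
    simpa [hz] using hzl
  obtain ⟨d, b, f, n, hrev, hL', hdb, hbn⟩ :=
    leftReduce_spec hLrev (by simp [Nat.one_le_iff_ne_zero, hm])
  have hw : bridgeReduce z = (b :: n).reverse := by
    rw [bridgeReduce, if_neg hR, hL, hL']
  have hsplit : a :: m = (b :: n).reverse ++ (List.replicate f b ++ [d]) := by
    rw [← List.reverse_reverse (a :: m), hrev]
    simp
  rw [hw] at hlen ⊢
  refine ⟨a, b, c, d, e, f, ?_, by simp, hca, hdb, by rw [hz, hsplit]; simp, ?_⟩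
  · have := congrArg List.head? hsplit
    rwa [List.head?_append_of_ne_nil _ (List.ne_nil_of_length_pos (by omega)), eq_comm] at this
  · refine isBridge_iff.2 ⟨hlen, .of_append (q := List.replicate f b ++ [d]) hlen ?_,
      by simpa [firstRunLengthOne_cons] using hbn⟩
    rw [← hsplit]
    exact firstRunLengthOne_cons.2 ham

theorem isBridge_iterate_bridgeReduce {T z : List α} (hz : IsBridge z) (hzT : z <:+: T) :
    ∀ j, 2 ≤ (bridgeReduce^[j] z).length →
      IsBridge (bridgeReduce^[j] z) ∧ bridgeReduce^[j] z <:+: T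
  | 0, _ => ⟨hz, hzT⟩
  | j + 1, h => by
    rw [Function.iterate_succ_apply'] at h ⊢
    have hne : bridgeReduce (bridgeReduce^[j] z) ≠ [] := List.ne_nil_of_length_pos (by omega)
    obtain ⟨hyb, hyT⟩ :=
      isBridge_iterate_bridgeReduce hz hzT j (two_le_length_of_bridgeReduce_ne_nil hne)
    obtain ⟨a, b, c, d, e, f, -, -, -, -, hdec, hw⟩ := bridgeReduce_decomp hyb h
    refine ⟨hw, List.IsInfix.trans ⟨c :: List.replicate e a, List.replicate f b ++ [d], ?_⟩ hyT⟩
    conv_rhs => rw [hdec]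
    simp

end Reduction

section Occurrences

variable {α : Type*} [DecidableEq α]

def occurrencePositions (T z : List α) : Finset ℕ :=
  (Finset.range (T.length + 1)).filter
    (fun i => (T.drop i).take z.length = z ∧ i + z.length ≤ T.length)

theorem countOcc_eq_card (z T : List α) : countOcc z T = (occurrencePositions T z).card := rfl

theorem mem_occurrencePositions {T z : List α} {q : ℕ} :
    q ∈ occurrencePositions T z ↔ ∃ A B, T = A ++ z ++ B ∧ A.length = q := by
  simp only [occurrencePositions, Finset.mem_filter, Finset.mem_range]
  constructor
  · rintro ⟨-, htake, hlen⟩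
    refine ⟨T.take q, T.drop (q + z.length), ?_, by simp; omega⟩
    conv_lhs => rw [← List.take_append_drop q T, ← List.take_append_drop z.length (T.drop q),
      htake, List.drop_drop]
    rw [List.append_assoc]
  · rintro ⟨A, B, rfl, rfl⟩
    simp only [List.length_append, List.append_assoc, List.drop_left, List.take_left, true_and]
    omega

theorem one_le_countOcc {T z : List α} (h : z <:+: T) : 1 ≤ countOcc z T := by
  obtain ⟨A, B, rfl⟩ := h
  rw [countOcc_eq_card]
  exact Finset.card_pos.2 ⟨A.length, mem_occurrencePositions.2 ⟨A, B, rfl, rfl⟩⟩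

theorem mem_KFin {T w z : List α} :
    z ∈ KFin T w ↔ z <:+: T ∧ IsBridge z ∧ bridgeReduce z = w := by
  simp only [KFin, Finset.mem_filter, List.mem_toFinset, List.mem_sublists]
  exact and_iff_right_of_imp fun h => h.1.sublist

theorem eq_cons_replicate_of_mem_KFin {T w z : List α} {a b : α} (hw : 2 ≤ w.length)
    (ha : w.head? = some a) (hb : w.getLast? = some b) (hz : z ∈ KFin T w) :
    ∃ c d e f, c ≠ a ∧ d ≠ b ∧
      z = c :: (List.replicate e a ++ w ++ (List.replicate f b ++ [d])) := by
  obtain ⟨-, hzb, rfl⟩ := mem_KFin.1 hz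
  obtain ⟨a', b', c, d, e, f, ha', hb', hca, hdb, hdec, -⟩ := bridgeReduce_decomp hzb hw
  obtain rfl : a = a' := Option.some.inj (ha.symm.trans ha')
  obtain rfl : b = b' := Option.some.inj (hb.symm.trans hb')
  exact ⟨c, d, e, f, hca, hdb, hdec⟩

theorem length_takeWhile_replicate_append {w r : List α} {a : α} (hw2 : 2 ≤ w.length)
    (hwh : FirstRunLengthOne w) (ha : w.head? = some a) (e : ℕ) :
    ((List.replicate e a ++ w ++ r).takeWhile (· == a)).length = e + 1 := by
  obtain ⟨w', rfl⟩ : ∃ w', w = a :: w' := by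
    cases w with
    | nil => simp at ha
    | cons a' w' => exact ⟨w', by simp_all⟩
  have hw' : w' ≠ [] := by rintro rfl; simp at hw2
  have hhead : (w' ++ r).head? ≠ some a := by
    rw [List.head?_append_of_ne_nil _ hw']
    exact firstRunLengthOne_cons.1 hwh
  have hsplit : List.replicate e a ++ a :: w' ++ r = List.replicate (e + 1) a ++ (w' ++ r) := by
    simp [List.replicate_succ']
  rw [hsplit, takeWhile_replicate_append hhead, List.length_replicate]

/-- Shifting an occurrence of `z ∈ K(w)` by the length of the second run of `z` gives an
occurrence of `w`; by `eq_of_append_replicate_append_eq` this map is injective. -/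
theorem sum_countOcc_KFin_le {T w : List α} (hw : IsBridge w) :
    ∑ z ∈ KFin T w, countOcc z T ≤ countOcc w T := by
  have hne : w ≠ [] := List.ne_nil_of_length_pos (by have := hw.1; omega)
  obtain ⟨a, ha⟩ : ∃ a, w.head? = some a := ⟨_, List.head?_eq_some_head hne⟩
  obtain ⟨b, hb⟩ : ∃ b, w.getLast? = some b := ⟨_, List.getLast?_eq_some_getLast hne⟩
  let offset (z : List α) : ℕ := (z.tail.takeWhile (· == a)).length
  have hextend : ∀ z ∈ KFin T w, ∀ q ∈ occurrencePositions T z, ∃ A B c d e f, c ≠ a ∧ d ≠ b ∧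
      z = c :: (List.replicate e a ++ w ++ (List.replicate f b ++ [d])) ∧
      T = (A ++ c :: List.replicate e a) ++ (w ++ (List.replicate f b ++ d :: B)) ∧
      A.length = q ∧ offset z = e + 1 := by
    intro z hz q hq
    obtain ⟨c, d, e, f, hca, hdb, rfl⟩ := eq_cons_replicate_of_mem_KFin hw.1 ha hb hz
    obtain ⟨A, B, hT, hA⟩ := mem_occurrencePositions.1 hq
    obtain ⟨hw2, hwh, -⟩ := isBridge_iff.1 hw
    exact ⟨A, B, c, d, e, f, hca, hdb, rfl, by rw [hT]; simp, hA,
      length_takeWhile_replicate_append hw2 hwh ha e⟩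
  rw [countOcc_eq_card]
  calc ∑ z ∈ KFin T w, countOcc z T = ((KFin T w).sigma (occurrencePositions T)).card := by
        simp only [countOcc_eq_card, Finset.card_sigma]
    _ ≤ (occurrencePositions T w).card :=
        Finset.card_le_card_of_injOn (fun p : (_ : List α) × ℕ => p.2 + offset p.1) ?_ ?_
  · rintro ⟨z, q⟩ hzq
    obtain ⟨hz, hq⟩ := Finset.mem_sigma.1 hzq
    obtain ⟨A, B, c, d, e, f, -, -, -, hT, rfl, hoff⟩ := hextend z hz q hq
    refine mem_occurrencePositions.2 ⟨A ++ c :: List.replicate e a,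
      List.replicate f b ++ d :: B, ?_, ?_⟩
    · exact hT.trans (List.append_assoc _ _ _).symm
    · simp only [hoff, List.length_append, List.length_cons, List.length_replicate]
  · rintro ⟨z₁, q₁⟩ h₁ ⟨z₂, q₂⟩ h₂ heq
    obtain ⟨hz₁, hq₁⟩ := Finset.mem_sigma.1 h₁
    obtain ⟨hz₂, hq₂⟩ := Finset.mem_sigma.1 h₂
    obtain ⟨A₁, B₁, c₁, d₁, e₁, f₁, hc₁, hd₁, rfl, hT₁, rfl, hoff₁⟩ := hextend z₁ hz₁ q₁ hq₁
    obtain ⟨A₂, B₂, c₂, d₂, e₂, f₂, hc₂, hd₂, rfl, hT₂, rfl, hoff₂⟩ := hextend _ hz₂ q₂ hq₂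
    simp only [hoff₁, hoff₂] at heq
    obtain ⟨rfl, rfl, rfl, rfl, rfl⟩ :=
      eq_of_append_replicate_append_eq hc₁ hc₂ hd₁ hd₂ (by omega) (hT₁.symm.trans hT₂)
    rfl

end Occurrences

section Iterates

variable {α : Type*} [DecidableEq α]

theorem mem_KIter {T w z : List α} {t : ℕ} :
    z ∈ KIter T w t ↔ z <:+: T ∧ IsBridge z ∧ bridgeReduce^[t] z = w := by
  simp only [KIter, Finset.mem_filter, List.mem_toFinset, List.mem_sublists]
  exact and_iff_right_of_imp fun h => h.1.sublist

theorem KIter_succ {T w : List α} (hw : w ≠ []) (i : ℕ) :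
    KIter T w (i + 1) = (KFin T w).biUnion (KIter T · i) := by
  ext z
  simp only [Finset.mem_biUnion, mem_KIter, mem_KFin]
  constructor
  · rintro ⟨hzT, hz, hred⟩
    rw [Function.iterate_succ_apply'] at hred
    have hlen := two_le_length_of_bridgeReduce_ne_nil (hred ▸ hw)
    obtain ⟨hyb, hyT⟩ := isBridge_iterate_bridgeReduce hz hzT i hlen
    exact ⟨_, ⟨hyT, hyb, hred⟩, hzT, hz, rfl⟩
  · rintro ⟨y, ⟨-, -, rfl⟩, hzT, hz, rfl⟩
    exact ⟨hzT, hz, Function.iterate_succ_apply' ..⟩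

theorem KplusIter_succ {T w : List α} (hw : w ≠ []) (i : ℕ) :
    KplusIter T w (i + 1) = (KFin T w).biUnion (KplusIter T · i) := by
  rw [KplusIter, KIter_succ hw, Finset.filter_biUnion]
  rfl

theorem KplusIter_zero {T z : List α} (hzT : z <:+: T) (hz : IsBridge z) :
    KplusIter T z 0 = ({z} : Finset (List α)).filter (fun y => 2 ≤ (KFin T y).card) := by
  ext y
  simp only [KplusIter, Finset.mem_filter, mem_KIter, Finset.mem_singleton,
    Function.iterate_zero_apply]
  constructor
  · rintro ⟨⟨-, -, hy⟩, hK⟩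
    exact ⟨hy, hK⟩
  · rintro ⟨rfl, hK⟩
    exact ⟨⟨hzT, hz, rfl⟩, hK⟩

theorem pairwiseDisjoint_KplusIter (T : List α) (s : Set (List α)) (i : ℕ) :
    s.PairwiseDisjoint (KplusIter T · i) := by
  intro z₁ _ z₂ _ hne
  refine Finset.disjoint_left.2 fun y hy₁ hy₂ => hne ?_
  rw [← (mem_KIter.1 (Finset.mem_filter.1 hy₁).1).2.2,
    ← (mem_KIter.1 (Finset.mem_filter.1 hy₂).1).2.2]

theorem sum_range_sum_KplusIter_succ {T w : List α} (hw : w ≠ []) (g : List α → ℕ) (t : ℕ) :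
    ∑ i ∈ Finset.range (t + 1), ∑ y ∈ KplusIter T w (i + 1), g y =
      ∑ z ∈ KFin T w, (∑ i ∈ Finset.range t, ∑ y ∈ KplusIter T z (i + 1), g y +
        if 2 ≤ (KFin T z).card then g z else 0) := by
  simp_rw [KplusIter_succ hw, Finset.sum_biUnion (pairwiseDisjoint_KplusIter T _ _)]
  rw [Finset.sum_comm]
  refine Finset.sum_congr rfl fun z hz => ?_
  obtain ⟨hzT, hzb, -⟩ := mem_KFin.1 hz
  rw [Finset.sum_range_succ', KplusIter_zero hzT hzb, Finset.sum_filter, Finset.sum_singleton]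

end Iterates

section Counting

variable {α : Type*} [DecidableEq α]

theorem card_KFin_le_sum_countOcc (T w : List α) :
    (KFin T w).card ≤ ∑ z ∈ KFin T w, countOcc z T := by
  simpa using Finset.card_nsmul_le_sum (KFin T w) (countOcc · T) 1
    fun z hz => one_le_countOcc (mem_KFin.1 hz).1

/-- The induction on `t` runs with `∑_{z ∈ K(w)} #z` in place of `#w`: unlike `#w`, this bound
splits over the children `z ∈ K(w)`. -/
theorem card_KFin_add_sum_le (T : List α) (t : ℕ) {w : List α} (hw : IsBridge w) :
    (KFin T w).card + ∑ i ∈ Finset.range t, ∑ z ∈ KplusIter T w (i + 1), (KFin T z).card ≤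
      ∑ z ∈ KFin T w, countOcc z T + ∑ i ∈ Finset.range t, (KplusIter T w (i + 1)).card := by
  induction t generalizing w with
  | zero => simpa using card_KFin_le_sum_countOcc T w
  | succ t ih =>
    have hne : w ≠ [] := List.ne_nil_of_length_pos (by have := hw.1; omega)
    simp only [Finset.card_eq_sum_ones (KplusIter T _ _)]
    rw [Finset.card_eq_sum_ones (KFin T w), sum_range_sum_KplusIter_succ hne,
      sum_range_sum_KplusIter_succ hne, ← Finset.sum_add_distrib, ← Finset.sum_add_distrib]
    refine Finset.sum_le_sum fun z hz => ?_
    obtain ⟨hzT, hzb, -⟩ := mem_KFin.1 hz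
    have hIH := ih hzb
    simp only [Finset.card_eq_sum_ones (KplusIter T _ _)] at hIH
    have hcount := sum_countOcc_KFin_le (T := T) hzb
    have hpos := one_le_countOcc hzT
    have hempty : (KFin T z).card = 0 → ∑ y ∈ KFin T z, countOcc y T = 0 := fun h => by
      rw [Finset.card_eq_zero.1 h, Finset.sum_empty]
    -- `z` is counted once in `|K(w)|`; if `K(z) = ∅`, only `1 ≤ #z` pays for it.
    split_ifs <;> omega

end Counting

theorem stmt6_general {α : Type*} [DecidableEq α] (T w : List α) (hb : IsBridge w) (t : ℕ) :
    (KFin T w).card + ∑ i ∈ Finset.Icc 1 t, ∑ z ∈ KplusIter T w i, (KFin T z).card ≤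
      countOcc w T + ∑ i ∈ Finset.Icc 1 t, (KplusIter T w i).card := by
  have hIcc (F : ℕ → ℕ) : ∑ i ∈ Finset.Icc 1 t, F i = ∑ i ∈ Finset.range t, F (i + 1) := by
    rw [Finset.range_eq_Ico, Finset.sum_Ico_add' F 0 t 1]
    rfl
  rw [hIcc, hIcc]
  have := card_KFin_add_sum_le T t hb
  have := sum_countOcc_KFin_le (T := T) hb
  omega

theorem stmt6 {α : Type*} [DecidableEq α] (T w : List α) (hb : IsBridge w)
    (h2 : 2 ≤ (KFin T w).card) (t : ℕ) (ht : 1 ≤ t) :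
    (KFin T w).card + ∑ i ∈ Finset.Icc 1 t, ∑ z ∈ KplusIter T w i, (KFin T z).card ≤
      countOcc w T + ∑ i ∈ Finset.Icc 1 t, (KplusIter T w i).card :=
  stmt6_general T w hb t
end

section
/- For any string T with RLE size m, the number of type-4 minimal absent words for T (MAWs aub with R(aub) ≥ 4, a ≠ u[1], b ≠ u[|u|]) is O(m²). More precisely |M₄| ≤ (2(2m−3))². -/
/-!
Write a type-4 MAW as `z = a c^(p+1) M d^(q+1) b` with `a ≠ c`, `b ≠ d` and the two inner runs
maximal. It is determined by the pair of cores `leftCore z = d Mᴿ c^(p+1) a` and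
`leftCore zᴿ = c M d^(q+1) b`. Read in `Tᴿ`, the core `u = σ c^(p+1) a` (`σ = d Mᴿ`) starts a
suffix of `Tᴿ` whose first two letters differ (the occurrence of `z.dropLast`), and `σ c` starts
another such suffix that does not continue with `u` (the occurrence of `z.tail`; otherwise `z`
itself would occur). There are at most `m - 1` such suffixes `S`, and in the trie of `S` every core
is either a child of a branching node (at most `2 (|S| - 1)` of them) or is recovered from the
branching node `lcp x y` of its two witnesses (at most `|S| - 1`). So each core takes at most
`3 (m - 2) ≤ 2 (2m - 3)` values.
-/

namespace Type4MAW

variable {α : Type*}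

section Runs

variable [DecidableEq α]

def changeCount : List α → ℕ
  | a :: b :: l => (if a = b then 0 else 1) + changeCount (b :: l)
  | _ => 0

@[simp] lemma changeCount_nil : changeCount ([] : List α) = 0 := rfl

@[simp] lemma changeCount_singleton (a : α) : changeCount [a] = 0 := rfl

lemma changeCount_cons_cons (a b : α) (l : List α) :
    changeCount (a :: b :: l) = (if a = b then 0 else 1) + changeCount (b :: l) := rfl

lemma changeCount_cons_le (a : α) (l : List α) : changeCount (a :: l) ≤ changeCount l + 1 := by
  cases l with
  | nil => simp
  | cons b l => rw [changeCount_cons_cons]; split <;> omega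

lemma changeCount_append_le :
    ∀ l₁ l₂ : List α, changeCount (l₁ ++ l₂) ≤ changeCount l₁ + changeCount l₂ + 1
  | [], l₂ => by simp
  | [a], l₂ => by simpa using changeCount_cons_le a l₂
  | a :: b :: l₁, l₂ => by
    have := changeCount_append_le (b :: l₁) l₂
    simp only [List.cons_append, changeCount_cons_cons] at this ⊢
    omega

@[simp] lemma changeCount_replicate (n : ℕ) (c : α) : changeCount (List.replicate n c) = 0 := by
  induction n with
  | zero => rfl
  | succ n ih => cases n with
    | zero => rfl
    | succ n => rw [List.replicate_succ, List.replicate_succ, changeCount_cons_cons,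
        ← List.replicate_succ, ih, if_pos rfl]

lemma changeCount_append_pair (a b : α) :
    ∀ l : List α, changeCount (l ++ [a, b]) = changeCount (l ++ [a]) + if a = b then 0 else 1
  | [] => by simp [changeCount_cons_cons]
  | [x] => by simp [changeCount_cons_cons]
  | x :: y :: l => by
    simp only [List.cons_append, changeCount_cons_cons]
    have := changeCount_append_pair a b (y :: l)
    simp only [List.cons_append] at this
    omega

lemma changeCount_reverse : ∀ l : List α, changeCount l.reverse = changeCount l
  | [] => rfl
  | [_] => rfl
  | a :: b :: l => by
    have ih := changeCount_reverse (b :: l)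
    rw [List.reverse_cons, List.reverse_cons, List.append_assoc, List.singleton_append,
      changeCount_append_pair, ← List.reverse_cons, ih, changeCount_cons_cons]
    by_cases h : a = b <;> simp [h, eq_comm, Nat.add_comm]

lemma length_destutter'_ne :
    ∀ (a : α) (l : List α), (l.destutter' (· ≠ ·) a).length = changeCount (a :: l) + 1
  | a, [] => by simp [List.destutter'_nil]
  | a, b :: l => by
    rw [changeCount_cons_cons, List.destutter'_cons]
    by_cases h : a = b
    · subst h; simp [length_destutter'_ne a l]
    · simp [h, length_destutter'_ne b l]; omega

lemma rleSize_eq_changeCount_add_one {l : List α} (hl : l ≠ []) :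
    rleSize l = changeCount l + 1 := by
  obtain ⟨a, l, rfl⟩ := List.exists_cons_of_ne_nil hl
  simp [rleSize, List.destutter_cons', length_destutter'_ne]

lemma changeCount_eq_rleSize_sub_one (l : List α) : changeCount l = rleSize l - 1 := by
  rcases eq_or_ne l [] with rfl | hl
  · rfl
  · rw [rleSize_eq_changeCount_add_one hl, Nat.add_sub_cancel]

lemma rleSize_reverse (l : List α) : rleSize l.reverse = rleSize l := by
  rcases eq_or_ne l [] with rfl | hl
  · rfl
  · rw [rleSize_eq_changeCount_add_one hl, rleSize_eq_changeCount_add_one (by simpa using hl),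
      changeCount_reverse]

lemma dropWhile_replicate_append {c : α} {X : List α} (hX : X.head? ≠ some c) (n : ℕ) :
    (List.replicate n c ++ X).dropWhile (· == c) = X := by
  induction n with
  | zero =>
    cases X with
    | nil => rfl
    | cons x X => simp_all
  | succ n ih => simpa [List.replicate_succ, List.dropWhile_cons] using ih

lemma truncHead_replicate_append {c : α} {X : List α} (hX : X.head? ≠ some c) (n : ℕ) :
    truncHead (List.replicate (n + 1) c ++ X) = c :: X := by
  rw [List.replicate_succ, List.cons_append, truncHead, dropWhile_replicate_append hX]

lemma exists_replicate_append : ∀ {u : List α}, u ≠ [] →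
    ∃ (c : α) (n : ℕ) (X : List α), u = List.replicate (n + 1) c ++ X ∧ X.head? ≠ some c
  | [], h => absurd rfl h
  | [x], _ => ⟨x, 0, [], rfl, by simp⟩
  | x :: y :: t, _ => by
    obtain ⟨c, n, X, hu, hX⟩ := exists_replicate_append (u := y :: t) (by simp)
    by_cases hxc : x = c
    · exact ⟨c, n + 1, X, by rw [hu, hxc]; rfl, hX⟩
    · refine ⟨x, 0, y :: t, rfl, ?_⟩
      rw [hu]
      simpa [List.replicate_succ] using Ne.symm hxc

lemma replicate_append_inj {c₁ c₂ : α} {n₁ n₂ : ℕ} {X₁ X₂ : List α}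
    (h : List.replicate (n₁ + 1) c₁ ++ X₁ = List.replicate (n₂ + 1) c₂ ++ X₂)
    (h₁ : X₁.head? ≠ some c₁) (h₂ : X₂.head? ≠ some c₂) : c₁ = c₂ ∧ n₁ = n₂ ∧ X₁ = X₂ := by
  obtain rfl : c₁ = c₂ := by simpa [List.replicate_succ] using congrArg List.head? h
  have hX : X₁ = X₂ := by
    simpa [dropWhile_replicate_append h₁, dropWhile_replicate_append h₂]
      using congrArg (List.dropWhile (· == c₁)) h
  subst hX
  simpa using congrArg List.length h

lemma append_replicate_inj {c₁ c₂ : α} {n₁ n₂ : ℕ} {σ₁ σ₂ : List α}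
    (h : σ₁ ++ List.replicate (n₁ + 1) c₁ = σ₂ ++ List.replicate (n₂ + 1) c₂)
    (h₁ : σ₁.getLast? ≠ some c₁) (h₂ : σ₂.getLast? ≠ some c₂) :
    σ₁ = σ₂ ∧ c₁ = c₂ ∧ n₁ = n₂ := by
  have h' := congrArg List.reverse h
  simp only [List.reverse_append, List.reverse_replicate] at h'
  obtain ⟨hc, hn, hσ⟩ := replicate_append_inj h' (by simpa using h₁) (by simpa using h₂)
  exact ⟨List.reverse_injective hσ, hc, hn⟩

end Runs

lemma take_eq_take_of_prefix {l x : List α} (h : l <+: x) {n : ℕ} (hn : n ≤ l.length) :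
    x.take n = l.take n := by
  obtain ⟨r, rfl⟩ := h
  exact List.take_append_of_le_length hn

section CommonPrefix

variable [DecidableEq α]

def lcp : List α → List α → List α
  | a :: x, b :: y => if a = b then a :: lcp x y else []
  | _, _ => []

lemma prefix_lcp_iff : ∀ {l x y : List α}, l <+: lcp x y ↔ l <+: x ∧ l <+: y
  | [], _, _ => by simp
  | _ :: _, [], _ => by simp [lcp]
  | _ :: _, _ :: _, [] => by simp [lcp]
  | c :: l, a :: x, b :: y => by
    by_cases h : a = b
    · subst h
      rw [lcp, if_pos rfl, List.cons_prefix_cons, prefix_lcp_iff, List.cons_prefix_cons,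
        List.cons_prefix_cons]
      tauto
    · simp only [lcp, if_neg h, List.cons_prefix_cons]
      constructor
      · simp
      · rintro ⟨⟨rfl, -⟩, rfl, -⟩; exact absurd rfl h

lemma lcp_prefix_left (x y : List α) : lcp x y <+: x := (prefix_lcp_iff.1 (List.prefix_refl _)).1

lemma lcp_prefix_right (x y : List α) : lcp x y <+: y := (prefix_lcp_iff.1 (List.prefix_refl _)).2

lemma lcp_comm (x y : List α) : lcp x y = lcp y x := by
  have h₁ : lcp x y <+: lcp y x := prefix_lcp_iff.2 ⟨lcp_prefix_right x y, lcp_prefix_left x y⟩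
  have h₂ : lcp y x <+: lcp x y := prefix_lcp_iff.2 ⟨lcp_prefix_right y x, lcp_prefix_left y x⟩
  exact h₁.eq_of_length (h₁.length_le.antisymm h₂.length_le)

lemma take_eq_take_of_le_length_lcp {x y : List α} {n : ℕ} (h : n ≤ (lcp x y).length) :
    x.take n = y.take n := by
  rw [take_eq_take_of_prefix (lcp_prefix_left x y) h,
    take_eq_take_of_prefix (lcp_prefix_right x y) h]

/-- The ultrametric property of common prefixes. -/
lemma lcp_eq_of_length_lt {x y w : List α} (h : (lcp x y).length < (lcp x w).length) :
    lcp w y = lcp x y := by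
  have hxy : lcp x y <+: lcp x w :=
    List.prefix_of_prefix_length_le (lcp_prefix_left x y) (lcp_prefix_left x w) h.le
  have hle : lcp x y <+: lcp w y :=
    prefix_lcp_iff.2 ⟨hxy.trans (lcp_prefix_right x w), lcp_prefix_right x y⟩
  refine (hle.eq_of_length_le ?_).symm
  by_contra! hlt
  have hwy := take_eq_take_of_le_length_lcp (Nat.succ_le_of_lt hlt)
  have hxw := take_eq_take_of_le_length_lcp (Nat.succ_le_of_lt h)
  have hshared : x.take ((lcp x y).length + 1) <+: lcp x y :=
    prefix_lcp_iff.2 ⟨List.take_prefix _ _, hxw ▸ hwy ▸ List.take_prefix _ _⟩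
  have h₁ := hshared.length_le
  have h₂ := (lcp_prefix_left x w).length_le
  simp only [List.length_take] at h₁
  omega

lemma lcp_eq_or_of_length_le {x y w : List α} (h : (lcp x y).length ≤ (lcp x w).length) :
    lcp x y = lcp x w ∨ (lcp w y = lcp x y ∧ (lcp x y).length < (lcp x w).length) := by
  rcases h.lt_or_eq with h | h
  · exact .inr ⟨lcp_eq_of_length_lt h, h⟩
  · exact .inl ((List.prefix_of_prefix_length_le (lcp_prefix_left x y) (lcp_prefix_left x w)
      h.le).eq_of_length h)

lemma length_lcp_le_length_lcp {x y w : List α} (h : (lcp x y).length ≤ (lcp x w).length) :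
    (lcp y x).length ≤ (lcp y w).length := by
  rcases lcp_eq_or_of_length_le h with h | ⟨h, -⟩
  · refine List.IsPrefix.length_le (prefix_lcp_iff.2 ⟨lcp_prefix_left y x, ?_⟩)
    rw [lcp_comm, h]
    exact lcp_prefix_right x w
  · rw [lcp_comm y w, h, lcp_comm]

def branch (x y : List α) : List α := x.take ((lcp x y).length + 1)

lemma branch_eq_or_of_length_le {x y w : List α} (h : (lcp x y).length ≤ (lcp x w).length) :
    branch x y = branch x w ∨ branch x y = branch w y := by
  rcases lcp_eq_or_of_length_le h with h | ⟨h, hlt⟩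
  · exact .inl (by rw [branch, branch, h])
  · exact .inr (by rw [branch, branch, h, take_eq_take_of_le_length_lcp hlt])

lemma branch_eq_of_prefix {p x y : List α} {a : α} (hx : p ++ [a] <+: x) (hy : p <+: y)
    (hxy : ¬ p ++ [a] <+: y) : branch x y = p ++ [a] := by
  have hp : p <+: lcp x y := prefix_lcp_iff.2 ⟨(List.prefix_append p [a]).trans hx, hy⟩
  have hlcp : lcp x y = p := by
    refine (hp.eq_of_length_le (not_lt.1 fun hlt => hxy ?_)).symm
    have : p ++ [a] <+: lcp x y :=
      List.prefix_of_prefix_length_le hx (lcp_prefix_left x y) (by simpa using hlt)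
    exact this.trans (lcp_prefix_right x y)
  rw [branch, hlcp, List.prefix_iff_eq_take.1 hx, List.length_append, List.length_singleton]

end CommonPrefix

section PairCounting

variable {β γ : Type*} [DecidableEq β] [DecidableEq γ]

lemma card_image_offDiag_le (F : γ → γ → β) (k : ℕ)
    (step : ∀ (z : γ) (S : Finset γ), z ∉ S → S.Nonempty → ∃ E : Finset β, E.card ≤ k ∧
      ∀ x ∈ S, F z x ∈ E ∪ S.offDiag.image (Function.uncurry F) ∧
        F x z ∈ E ∪ S.offDiag.image (Function.uncurry F))
    (S : Finset γ) : (S.offDiag.image (Function.uncurry F)).card ≤ k * (S.card - 1) := by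
  induction S using Finset.induction_on with
  | empty => simp
  | insert z S hz ih =>
    rcases S.eq_empty_or_nonempty with rfl | hS
    · simp
    obtain ⟨E, hE, hF⟩ := step z S hz hS
    have hsub : (insert z S).offDiag.image (Function.uncurry F) ⊆
        E ∪ S.offDiag.image (Function.uncurry F) := by
      intro b hb
      simp only [Finset.mem_image, Finset.mem_offDiag, Finset.mem_insert, Prod.exists,
        Function.uncurry_apply_pair] at hb
      obtain ⟨x, y, ⟨hx, hy, hxy⟩, rfl⟩ := hb
      rcases hx with rfl | hx <;> rcases hy with rfl | hy
      · exact absurd rfl hxy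
      · exact (hF y hy).1
      · exact (hF x hx).2
      · exact Finset.mem_union_right _
          (Finset.mem_image.2 ⟨(x, y), Finset.mem_offDiag.2 ⟨hx, hy, hxy⟩, rfl⟩)
    obtain ⟨n, hn⟩ : ∃ n, S.card = n + 1 := Nat.exists_eq_succ_of_ne_zero hS.card_pos.ne'
    calc _ ≤ (E ∪ S.offDiag.image (Function.uncurry F)).card := Finset.card_le_card hsub
      _ ≤ k + k * (S.card - 1) := (Finset.card_union_le _ _).trans (add_le_add hE ih)
      _ = k * ((insert z S).card - 1) := by
        rw [Finset.card_insert_of_notMem hz, hn]; simp [Nat.mul_succ, Nat.add_comm]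

end PairCounting

section TrieCounting

variable [DecidableEq α]

/-- In the trie of `S`, `pairLcps S` are the nodes where two words of `S` part and
`pairBranches S` the nodes one letter below them. Adding a word `z` to `S` adds at most one of the
former and two of the latter, next to the word of `S` that shares the longest prefix with `z`. -/
def pairLcps (S : Finset (List α)) : Finset (List α) := S.offDiag.image (Function.uncurry lcp)

def pairBranches (S : Finset (List α)) : Finset (List α) :=
  S.offDiag.image (Function.uncurry branch)

lemma mem_pairLcps {S : Finset (List α)} {x y : List α} (hx : x ∈ S) (hy : y ∈ S)
    (hxy : x ≠ y) : lcp x y ∈ pairLcps S :=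
  Finset.mem_image.2 ⟨(x, y), Finset.mem_offDiag.2 ⟨hx, hy, hxy⟩, rfl⟩

lemma mem_pairBranches {S : Finset (List α)} {x y : List α} (hx : x ∈ S) (hy : y ∈ S)
    (hxy : x ≠ y) : branch x y ∈ pairBranches S :=
  Finset.mem_image.2 ⟨(x, y), Finset.mem_offDiag.2 ⟨hx, hy, hxy⟩, rfl⟩

lemma card_pairLcps_le (S : Finset (List α)) : (pairLcps S).card ≤ S.card - 1 := by
  rw [← one_mul (S.card - 1)]
  refine card_image_offDiag_le lcp 1 (fun z S _ hS => ?_) S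
  obtain ⟨w, hw, hmax⟩ := S.exists_max_image (fun x => (lcp z x).length) hS
  refine ⟨{lcp z w}, (Finset.card_singleton _).le, fun x hx => ?_⟩
  rw [lcp_comm x z, and_self]
  rcases lcp_eq_or_of_length_le (hmax x hx) with h | ⟨h, hlt⟩
  · exact Finset.mem_union_left _ (h ▸ Finset.mem_singleton_self _)
  · refine Finset.mem_union_right _ (h ▸ mem_pairLcps hw hx ?_)
    rintro rfl
    exact hlt.false

lemma card_pairBranches_le (S : Finset (List α)) :
    (pairBranches S).card ≤ 2 * (S.card - 1) := by
  refine card_image_offDiag_le branch 2 (fun z S _ hS => ?_) S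
  obtain ⟨w, hw, hmax⟩ := S.exists_max_image (fun x => (lcp z x).length) hS
  refine ⟨{branch z w, branch w z}, Finset.card_le_two, fun x hx => ⟨?_, ?_⟩⟩
  · rcases branch_eq_or_of_length_le (hmax x hx) with h | h
    · simp [h]
    · by_cases hwx : w = x
      · subst hwx; simp
      · exact Finset.mem_union_right _ (h ▸ mem_pairBranches hw hx hwx)
  · by_cases hxw : x = w
    · subst hxw; simp
    rcases branch_eq_or_of_length_le (length_lcp_le_length_lcp (hmax x hx)) with h | h
    · exact Finset.mem_union_right _ (h ▸ mem_pairBranches hx hw hxw)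
    · simp [h]

end TrieCounting

section Cores

variable [DecidableEq α]

def IsCore (S : Finset (List α)) (u : List α) : Prop :=
  ∃ (σ : List α) (c : α) (k : ℕ) (a : α), u = σ ++ List.replicate (k + 1) c ++ [a] ∧
    σ.getLast? ≠ some c ∧ a ≠ c ∧ (∃ x ∈ S, u <+: x) ∧ ∃ y ∈ S, σ ++ [c] <+: y ∧ ¬ u <+: y

open Classical in
noncomputable def cores (S : Finset (List α)) : Finset (List α) :=
  (S.biUnion fun x => x.inits.toFinset).filter (IsCore S)

lemma mem_cores {S : Finset (List α)} {u : List α} : u ∈ cores S ↔ IsCore S u := by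
  classical
  refine ⟨fun h => (Finset.mem_filter.1 h).2, fun h => Finset.mem_filter.2 ⟨?_, h⟩⟩
  obtain ⟨-, -, -, -, -, -, -, ⟨x, hx, hux⟩, -⟩ := h
  exact Finset.mem_biUnion.2 ⟨x, hx, List.mem_toFinset.2 (List.mem_inits _ _ |>.2 hux)⟩

lemma branch_eq_or_lcp_eq {σ x y : List α} {c a : α} {k : ℕ}
    (hx : σ ++ List.replicate (k + 1) c ++ [a] <+: x) (hy : σ ++ [c] <+: y)
    (hxy : ¬ σ ++ List.replicate (k + 1) c ++ [a] <+: y) :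
    branch x y = σ ++ List.replicate (k + 1) c ++ [a] ∨
      ∃ j, lcp x y = σ ++ List.replicate (j + 1) c := by
  set p := σ ++ List.replicate (k + 1) c
  have hpx : p <+: x := (List.prefix_append p [a]).trans hx
  by_cases hpy : p <+: y
  · exact .inl (branch_eq_of_prefix hx hpy hxy)
  right
  have hσc : σ ++ [c] <+: lcp x y := by
    refine prefix_lcp_iff.2 ⟨List.IsPrefix.trans ?_ hpx, hy⟩
    simp [p, List.replicate_succ]
  have hlcp : lcp x y <+: p := by
    refine List.prefix_of_prefix_length_le (lcp_prefix_left x y) hpx (not_lt.1 fun hlt => hpy ?_)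
    exact (List.prefix_of_prefix_length_le hpx (lcp_prefix_left x y) hlt.le).trans
      (lcp_prefix_right x y)
  obtain ⟨t, ht⟩ := hσc
  rw [← ht] at hlcp
  simp only [p, List.replicate_succ, List.append_assoc, List.singleton_append,
    List.prefix_append_right_inj, List.cons_prefix_cons, true_and] at hlcp
  obtain ⟨j, -, rfl⟩ := List.sublist_replicate_iff.1 hlcp.sublist
  exact ⟨j, by rw [← ht, List.replicate_succ]; simp⟩

lemma eq_or_mem_pairBranches_of_le {S : Finset (List α)} {σ x₁ x₂ : List α} {c a₁ a₂ : α}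
    {k₁ k₂ : ℕ} (hk : k₁ ≤ k₂) (ha₁ : a₁ ≠ c) (hx₁ : x₁ ∈ S) (hx₂ : x₂ ∈ S)
    (hu₁ : σ ++ List.replicate (k₁ + 1) c ++ [a₁] <+: x₁)
    (hu₂ : σ ++ List.replicate (k₂ + 1) c ++ [a₂] <+: x₂) :
    σ ++ List.replicate (k₁ + 1) c ++ [a₁] = σ ++ List.replicate (k₂ + 1) c ++ [a₂] ∨
      σ ++ List.replicate (k₁ + 1) c ++ [a₁] ∈ pairBranches S := by
  obtain ⟨d, rfl⟩ := Nat.exists_eq_add_of_le hk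
  have hsplit : σ ++ List.replicate (k₁ + d + 1) c ++ [a₂] =
      σ ++ List.replicate (k₁ + 1) c ++ (List.replicate d c ++ [a₂]) := by
    rw [Nat.add_right_comm, ← List.replicate_append_replicate]; simp only [List.append_assoc]
  rw [hsplit] at hu₂ ⊢
  by_cases h : σ ++ List.replicate (k₁ + 1) c ++ [a₁] <+: x₂
  · left
    have hpre := List.prefix_of_prefix_length_le h hu₂ (by simp)
    rw [List.prefix_append_right_inj] at hpre
    cases d with
    | zero => simpa using hpre
    | succ d => exact absurd (by simpa [List.replicate_succ] using hpre) ha₁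
  · right
    have hp : σ ++ List.replicate (k₁ + 1) c <+: x₂ := (List.prefix_append _ _).trans hu₂
    rw [← branch_eq_of_prefix hu₁ hp h]
    exact mem_pairBranches hx₁ hx₂ (by rintro rfl; exact h hu₁)

lemma card_cores_le (S : Finset (List α)) : (cores S).card ≤ 3 * (S.card - 1) := by
  set N := (cores S).filter (· ∉ pairBranches S)
  have hsub : cores S ⊆ pairBranches S ∪ N := fun u hu => by
    by_cases h : u ∈ pairBranches S
    · exact Finset.mem_union_left _ h
    · exact Finset.mem_union_right _ (Finset.mem_filter.2 ⟨hu, h⟩)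
  -- a core outside `pairBranches S` is determined by the lcp of its two witnesses
  have hN : N.card ≤ (pairLcps S).card := by
    refine Finset.card_le_card_of_forall_subsingleton
      (fun u ℓ => ∃ σ c k a j, u = σ ++ List.replicate (k + 1) c ++ [a] ∧
        ℓ = σ ++ List.replicate (j + 1) c ∧ σ.getLast? ≠ some c ∧ a ≠ c ∧ ∃ x ∈ S, u <+: x)
      (fun u hu => ?_) (fun ℓ _ => ?_)
    · obtain ⟨hu, hnb⟩ := Finset.mem_filter.1 hu
      obtain ⟨σ, c, k, a, rfl, hσ, hac, ⟨x, hx, hux⟩, y, hy, hσy, huy⟩ := mem_cores.1 hu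
      have hxy : x ≠ y := by rintro rfl; exact huy hux
      rcases branch_eq_or_lcp_eq hux hσy huy with h | ⟨j, h⟩
      · exact absurd (h ▸ mem_pairBranches hx hy hxy) hnb
      · exact ⟨lcp x y, mem_pairLcps hx hy hxy, σ, c, k, a, j, rfl, h, hσ, hac, x, hx, hux⟩
    · rintro u₁ ⟨hu₁, σ₁, c₁, k₁, a₁, j₁, rfl, rfl, hσ₁, ha₁, x₁, hx₁, hux₁⟩
        u₂ ⟨hu₂, σ₂, c₂, k₂, a₂, j₂, rfl, hℓ, hσ₂, ha₂, x₂, hx₂, hux₂⟩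
      obtain ⟨rfl, rfl, -⟩ := append_replicate_inj hℓ hσ₁ hσ₂
      have hnb₁ := (Finset.mem_filter.1 hu₁).2
      have hnb₂ := (Finset.mem_filter.1 hu₂).2
      rcases le_total k₁ k₂ with hk | hk
      · exact (eq_or_mem_pairBranches_of_le hk ha₁ hx₁ hx₂ hux₁ hux₂).resolve_right hnb₁
      · exact ((eq_or_mem_pairBranches_of_le hk ha₂ hx₂ hx₁ hux₂ hux₁).resolve_right hnb₂).symm
  calc (cores S).card ≤ (pairBranches S ∪ N).card := Finset.card_le_card hsub
    _ ≤ (pairBranches S).card + N.card := Finset.card_union_le _ _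
    _ ≤ 2 * (S.card - 1) + (S.card - 1) :=
      add_le_add (card_pairBranches_le S) (hN.trans (card_pairLcps_le S))
    _ = 3 * (S.card - 1) := by ring

end Cores

section Contexts

variable [DecidableEq α]

def startsWithChange : List α → Bool
  | a :: b :: _ => a ≠ b
  | _ => false

lemma startsWithChange_cons {a : α} {l : List α} (hl : l ≠ []) (h : l.head? ≠ some a) :
    startsWithChange (a :: l) := by
  obtain ⟨b, l, rfl⟩ := List.exists_cons_of_ne_nil hl
  simp only [List.head?_cons, ne_eq, Option.some.injEq] at h
  simpa [startsWithChange] using Ne.symm h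

def contexts (L : List α) : Finset (List α) := (L.tails.filter startsWithChange).toFinset

lemma mem_contexts {x L : List α} (hx : x <:+ L) (hc : startsWithChange x) : x ∈ contexts L :=
  List.mem_toFinset.2 (List.mem_filter.2 ⟨(List.mem_tails _ _).2 hx, hc⟩)

lemma length_filter_tails_startsWithChange :
    ∀ L : List α, (L.tails.filter startsWithChange).length = changeCount L
  | [] => rfl
  | [_] => rfl
  | a :: b :: L => by
    rw [List.tails_cons, List.filter_cons, changeCount_cons_cons,
      ← length_filter_tails_startsWithChange (b :: L)]
    by_cases h : a = b <;> simp [h, startsWithChange, Nat.add_comm]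

lemma card_contexts_le (L : List α) : (contexts L).card ≤ changeCount L :=
  (List.toFinset_card_le _).trans (length_filter_tails_startsWithChange L).le

lemma card_cores_contexts_le (L : List α) :
    (cores (contexts L)).card ≤ 2 * (2 * rleSize L - 3) := by
  have h₁ := card_cores_le (contexts L)
  have h₂ := card_contexts_le L
  have h₃ := changeCount_eq_rleSize_sub_one L
  omega

end Contexts

section LeftCore

lemma getLast?_cons_reverse (d : α) (M : List α) :
    (d :: M.reverse).getLast? = (M ++ [d]).head? := by
  rw [show d :: M.reverse = (M ++ [d]).reverse by simp, List.getLast?_reverse]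

variable [DecidableEq α]

def leftCore (z : List α) : List α := truncHead z.dropLast.reverse

lemma leftCore_eq {a b c d : α} {p q : ℕ} {M : List α} (hd : (M.reverse ++ [c]).head? ≠ some d) :
    leftCore (a :: (List.replicate (p + 1) c ++ M ++ List.replicate (q + 1) d ++ [b])) =
      d :: M.reverse ++ List.replicate (p + 1) c ++ [a] := by
  have hrev : (a :: (List.replicate (p + 1) c ++ M ++ List.replicate (q + 1) d)).reverse =
      List.replicate (q + 1) d ++ (M.reverse ++ List.replicate (p + 1) c ++ [a]) := by
    simp
  rw [leftCore, ← List.cons_append, List.dropLast_concat, hrev,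
    truncHead_replicate_append (by simpa [List.head?_append, List.replicate_succ] using hd)]
  simp

lemma leftCore_reverse_eq {a b c d : α} {p q : ℕ} {M : List α} (hc : (M ++ [d]).head? ≠ some c) :
    leftCore (a :: (List.replicate (p + 1) c ++ M ++ List.replicate (q + 1) d ++ [b])).reverse =
      c :: M ++ List.replicate (q + 1) d ++ [b] := by
  have hrev : (a :: (List.replicate (p + 1) c ++ M ++ List.replicate (q + 1) d ++ [b])).reverse =
      b :: (List.replicate (q + 1) d ++ M.reverse ++ List.replicate (p + 1) c ++ [a]) := by
    simp
  rw [hrev, leftCore_eq (by simpa using hc), List.reverse_reverse]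

end LeftCore

end Type4MAW

section Type4

open Type4MAW

variable {α : Type*} [DecidableEq α]

theorem IsMAW.reverse {w T : List α} (h : IsMAW w T) : IsMAW w.reverse T.reverse := by
  obtain ⟨hne, hw, hsub⟩ := h
  refine ⟨by simpa using hne, by simpa using hw, fun v hv hvw => ?_⟩
  rw [← List.reverse_reverse v, List.reverse_infix] at hv ⊢
  exact hsub _ hv (by rintro rfl; simp at hvw)

namespace IsType4MAW

theorem reverse {z T : List α} (h : IsType4MAW z T) : IsType4MAW z.reverse T.reverse := by
  obtain ⟨hmaw, h4, a, b, u, hu, rfl, ha, hb⟩ := h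
  refine ⟨hmaw.reverse, by rwa [rleSize_reverse], b, a, u.reverse, by simpa using hu,
    by simp, by simpa using hb, by simpa using ha⟩

theorem exists_decomp {z T : List α} (h : IsType4MAW z T) :
    ∃ (a b c d : α) (p q : ℕ) (M : List α),
      z = a :: (List.replicate (p + 1) c ++ M ++ List.replicate (q + 1) d ++ [b]) ∧
      a ≠ c ∧ b ≠ d ∧ (M ++ [d]).head? ≠ some c ∧ (M.reverse ++ [c]).head? ≠ some d := by
  obtain ⟨-, h4, a, b, u, hu, rfl, ha, hb⟩ := h
  obtain ⟨c, p, X, rfl, hX⟩ := exists_replicate_append hu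
  -- a single inner run would leave `z = a c^(p+1) b` with at most three runs
  have hXne : X ≠ [] := by
    rintro rfl
    have h₁ := changeCount_eq_rleSize_sub_one (a :: (List.replicate (p + 1) c ++ [b]))
    have h₂ := changeCount_cons_le a (List.replicate (p + 1) c ++ [b])
    have h₃ := changeCount_append_le (List.replicate (p + 1) c) [b]
    simp only [List.append_nil, List.cons_append, changeCount_replicate,
      changeCount_singleton] at h₁ h₂ h₃ h4
    omega
  obtain ⟨d, q, Y, hXY, hY⟩ := exists_replicate_append (u := X.reverse) (by simpa using hXne)
  obtain rfl : X = Y.reverse ++ List.replicate (q + 1) d := by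
    simpa using congrArg List.reverse hXY
  refine ⟨a, b, c, d, p, q, Y.reverse, by simp, ?_, ?_, ?_, ?_⟩
  · simpa [List.replicate_succ, eq_comm] using ha
  · rintro rfl
    exact hb (by
      simp only [List.replicate_succ' (n := q), ← List.append_assoc, List.getLast?_concat])
  · simpa [List.head?_append, List.replicate_succ] using hX
  · rw [List.reverse_reverse]
    cases Y with
    | nil => simpa [List.replicate_succ, eq_comm] using hX
    | cons y Y => simpa using hY

theorem isCore_leftCore {z T : List α} (h : IsType4MAW z T) :
    IsCore (contexts T.reverse) (leftCore z) := by
  obtain ⟨a, b, c, d, p, q, M, rfl, hac, -, hc, hd⟩ := h.exists_decomp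
  obtain ⟨⟨-, hz, hsub⟩, -⟩ := h
  rw [leftCore_eq hd]
  set D := List.replicate (p + 1) c ++ M ++ List.replicate (q + 1) d
  have hD : D.reverse = List.replicate q d ++ (d :: M.reverse ++ List.replicate (p + 1) c) := by
    rw [show List.replicate q d ++ (d :: M.reverse ++ List.replicate (p + 1) c) =
      List.replicate (q + 1) d ++ M.reverse ++ List.replicate (p + 1) c by
        simp [List.replicate_succ']]
    simp [D]
  have hinit : a :: D <:+: T := hsub _ (List.prefix_append (a :: D) [b]).isInfix (by simp)
  have htail : D ++ [b] <:+: T := hsub _ (List.suffix_cons a _).isInfix (by simp)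
  obtain ⟨P, Q, hPQ⟩ := List.reverse_infix.2 hinit
  obtain ⟨P', Q', hPQ'⟩ := List.reverse_infix.2 htail
  have hchange : ∀ r, startsWithChange (d :: M.reverse ++ List.replicate (p + 1) c ++ r) :=
    fun r => startsWithChange_cons (by simp)
      (by simpa [List.head?_append, List.replicate_succ] using hd)
  refine ⟨d :: M.reverse, c, p, a, rfl, ?_, hac,
    ⟨_, mem_contexts ⟨P ++ List.replicate q d, ?_⟩ (hchange ([a] ++ Q)), ⟨Q, by simp⟩⟩,
    ⟨_, mem_contexts ⟨P' ++ b :: List.replicate q d, ?_⟩ (hchange Q'), ?_, ?_⟩⟩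
  · rwa [getLast?_cons_reverse]
  · rw [← hPQ, List.reverse_cons, hD]
    simp
  · rw [← hPQ', List.reverse_append, hD]
    simp
  · simp [List.replicate_succ]
  · -- otherwise `a` precedes the occurrence of `z.tail`, and `z` occurs in `T`
    intro hpre
    obtain ⟨Q'', rfl⟩ := (List.prefix_append_right_inj _).1 hpre
    apply hz
    rw [← List.reverse_infix, ← hPQ']
    exact ⟨P', Q'', by simp⟩

theorem eq_of_leftCore_eq {z₁ z₂ T₁ T₂ : List α} (h₁ : IsType4MAW z₁ T₁)
    (h₂ : IsType4MAW z₂ T₂) (hl : leftCore z₁ = leftCore z₂)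
    (hr : leftCore z₁.reverse = leftCore z₂.reverse) : z₁ = z₂ := by
  obtain ⟨a₁, b₁, c₁, d₁, p₁, q₁, M₁, rfl, -, -, hc₁, hd₁⟩ := h₁.exists_decomp
  obtain ⟨a₂, b₂, c₂, d₂, p₂, q₂, M₂, rfl, -, -, hc₂, hd₂⟩ := h₂.exists_decomp
  rw [leftCore_eq hd₁, leftCore_eq hd₂] at hl
  obtain ⟨hl, ha⟩ := List.append_inj' hl rfl
  obtain ⟨hM, rfl, rfl⟩ := append_replicate_inj hl (by rwa [getLast?_cons_reverse])
    (by rwa [getLast?_cons_reverse])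
  obtain ⟨rfl, hMr⟩ := List.cons_eq_cons.1 hM
  obtain rfl := List.reverse_injective hMr
  obtain rfl : a₁ = a₂ := by simpa using ha
  rw [leftCore_reverse_eq hc₁, leftCore_reverse_eq hc₂] at hr
  obtain ⟨hr, hb⟩ := List.append_inj' hr rfl
  obtain rfl : b₁ = b₂ := by simpa using hb
  obtain rfl : q₁ = q₂ := by simpa using congrArg List.length hr
  rfl

end IsType4MAW

end Type4

theorem stmt9 {α : Type*} [DecidableEq α] (T : List α) :
    {z : List α | IsType4MAW z T}.ncard ≤ (2 * (2 * rleSize T - 3)) ^ 2 := by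
  open Type4MAW in
  calc {z : List α | IsType4MAW z T}.ncard
      ≤ (cores (contexts T.reverse) ×ˢ cores (contexts T)).card := by
        rw [← Set.ncard_coe_finset]
        refine Set.ncard_le_ncard_of_injOn (fun z => (leftCore z, leftCore z.reverse))
          (fun z hz => ?_) (fun z₁ hz₁ z₂ hz₂ h => ?_) (Finset.finite_toSet _)
        · have hr := hz.reverse.isCore_leftCore
          rw [List.reverse_reverse] at hr
          exact Finset.mem_product.2 ⟨mem_cores.2 hz.isCore_leftCore, mem_cores.2 hr⟩
        · exact hz₁.eq_of_leftCore_eq hz₂ (congrArg Prod.fst h) (congrArg Prod.snd h)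
    _ ≤ (2 * (2 * rleSize T - 3)) ^ 2 := by
        rw [Finset.card_product, sq]
        have h := card_cores_contexts_le T.reverse
        rw [rleSize_reverse] at h
        exact Nat.mul_le_mul h (card_cores_contexts_le T)
end

section
/- Let T be a string, c a character, and a, b characters with a ≠ c and b ≠ c. Define BS_{acb}(T) as the set of substrings of T of the form a c^ℓ b (ℓ ≥ 1) and ℓ_max = max{ ℓ : a c^ℓ b ∈ BS_{acb}(T) } (assuming BS_{acb}(T) is nonempty). Then for every 1 ≤ k < ℓ_max, the string a c^k b is a minimal absent word for T if and only if a c^k b ∉ BS_{acb}(T). -/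
theorem List.IsInfix.infix_dropLast_or_infix_tail {α : Type*} {v w : List α}
    (h : v <:+: w) (hne : v ≠ w) : v <:+: w.dropLast ∨ v <:+: w.tail := by
  obtain ⟨s, t, rfl⟩ := h
  rcases eq_or_ne t [] with rfl | ht
  · obtain ⟨x, s', rfl⟩ := List.exists_cons_of_ne_nil (l := s) (by rintro rfl; simp at hne)
    exact .inr (by simpa using (List.suffix_append s' v).isInfix)
  · refine .inl ⟨s, t.dropLast, ?_⟩
    rw [List.dropLast_append_of_ne_nil ht]

theorem isMAW_iff_not_infix {α : Type*} [DecidableEq α] {w T : List α} (hw : w ≠ [])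
    (hdropLast : w.dropLast <:+: T) (htail : w.tail <:+: T) :
    IsMAW w T ↔ ¬ w <:+: T := by
  refine ⟨fun h => h.2.1, fun habs => ⟨hw, habs, fun v hv hne => ?_⟩⟩
  rcases hv.infix_dropLast_or_infix_tail hne with h | h
  exacts [h.trans hdropLast, h.trans htail]

section Replicate

variable {α : Type*} {a b c : α} {k ℓ : ℕ}

theorem dropLast_cons_replicate_concat_infix (hkℓ : k ≤ ℓ) :
    (a :: (List.replicate k c ++ [b])).dropLast <:+: a :: (List.replicate ℓ c ++ [b]) := by
  rw [← List.cons_append, List.dropLast_concat]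
  refine (List.prefix_append _ (List.replicate (ℓ - k) c ++ [b])).isInfix.trans ?_
  rw [List.cons_append, ← List.append_assoc, ← List.replicate_add, Nat.add_sub_cancel' hkℓ]

theorem tail_cons_replicate_concat_infix (hkℓ : k ≤ ℓ) :
    (a :: (List.replicate k c ++ [b])).tail <:+: a :: (List.replicate ℓ c ++ [b]) := by
  refine List.IsInfix.trans ?_ (List.suffix_cons _ _).isInfix
  refine (List.suffix_append (List.replicate (ℓ - k) c) _).isInfix.trans ?_
  rw [List.tail_cons, ← List.append_assoc, ← List.replicate_add, Nat.sub_add_cancel hkℓ]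

end Replicate

theorem stmt13_general {α : Type*} [DecidableEq α] (T : List α) (a b c : α)
    (ℓmax : ℕ)
    (hocc : (a :: (List.replicate ℓmax c ++ [b])) <:+: T)
    (k : ℕ) (hk : k < ℓmax) :
    IsMAW (a :: (List.replicate k c ++ [b])) T ↔
      ¬ (a :: (List.replicate k c ++ [b])) <:+: T :=
  isMAW_iff_not_infix (List.cons_ne_nil _ _)
    ((dropLast_cons_replicate_concat_infix hk.le).trans hocc)
    ((tail_cons_replicate_concat_infix hk.le).trans hocc)

theorem stmt13 {α : Type*} [DecidableEq α] (T : List α) (a b c : α)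
    (hac : a ≠ c) (hbc : b ≠ c) (ℓmax : ℕ) (hℓ1 : 1 ≤ ℓmax)
    (hocc : (a :: (List.replicate ℓmax c ++ [b])) <:+: T)
    (hmax : ∀ ℓ : ℕ, 1 ≤ ℓ → (a :: (List.replicate ℓ c ++ [b])) <:+: T → ℓ ≤ ℓmax)
    (k : ℕ) (hk1 : 1 ≤ k) (hk : k < ℓmax) :
    IsMAW (a :: (List.replicate k c ++ [b])) T ↔
      ¬ (a :: (List.replicate k c ++ [b])) <:+: T :=
  stmt13_general T a b c ℓmax hocc k hk
end

section
/- Let T be a string, c a character, and suppose a c^i b' and a' c^j b are substrings of T with a ≠ c, b ≠ c, b' ≠ b, a' ≠ a, and let ℓ = min{i, j}. If a c^ℓ b does not occur in T, then for every 1 ≤ k ≤ ℓ such that a c^k b does not occur in T, the string a c^k b is a minimal absent word for T. -/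
/-
A proper substring of `a u b` misses its first or its last letter, so it is a substring of
`a u` or of `u b`. Hence `a u b` is a minimal absent word as soon as it is absent while `a u`
and `u b` occur. For the combined bridge `a c^k b` with `k ≤ min i j`, the word `a c^k` is a
prefix of `a c^i b'` and `c^k b` is a suffix of `a' c^j b`.
-/

namespace List

variable {α : Type*}

theorem infix_cons_append_singleton_of_ne {v u : List α} {a b : α}
    (hv : v <:+: a :: (u ++ [b])) (hne : v ≠ a :: (u ++ [b])) :
    v <:+: a :: u ∨ v <:+: u ++ [b] := by
  rcases infix_cons_iff.mp hv with hpre | hinf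
  · rw [← cons_append, prefix_concat_iff] at hpre
    exact .inl (hpre.resolve_left hne).isInfix
  · exact .inr hinf

theorem cons_replicate_prefix_cons_replicate_append {k i : ℕ} (a c : α) (l : List α)
    (hki : k ≤ i) : a :: replicate k c <+: a :: (replicate i c ++ l) :=
  ⟨replicate (i - k) c ++ l, by
    rw [cons_append, ← append_assoc, ← replicate_add, Nat.add_sub_cancel' hki]⟩

theorem replicate_append_suffix_cons_replicate_append {k j : ℕ} (a c : α) (l : List α)
    (hkj : k ≤ j) : replicate k c ++ l <:+ a :: (replicate j c ++ l) :=
  ⟨a :: replicate (j - k) c, by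
    rw [cons_append, ← append_assoc, ← replicate_add, Nat.sub_add_cancel hkj]⟩

end List

open List

theorem isMAW_cons_append_singleton {α : Type*} [DecidableEq α] {T u : List α} {a b : α}
    (hpre : a :: u <:+: T) (hsuf : u ++ [b] <:+: T) (habs : ¬ a :: (u ++ [b]) <:+: T) :
    IsMAW (a :: (u ++ [b])) T := by
  refine ⟨cons_ne_nil _ _, habs, fun v hv hne => ?_⟩
  rcases infix_cons_append_singleton_of_ne hv hne with h | h
  · exact h.trans hpre
  · exact h.trans hsuf

theorem stmt14_general {α : Type*} [DecidableEq α] (T : List α) (a a' b b' c : α)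
    (i j : ℕ)
    (h1 : (a :: (List.replicate i c ++ [b'])) <:+: T)
    (h2 : (a' :: (List.replicate j c ++ [b])) <:+: T)
    (k : ℕ) (hk : k ≤ min i j)
    (habs : ¬ (a :: (List.replicate k c ++ [b])) <:+: T) :
    IsMAW (a :: (List.replicate k c ++ [b])) T := by
  have hpre : a :: replicate k c <:+: T :=
    (cons_replicate_prefix_cons_replicate_append a c [b']
      (hk.trans (min_le_left i j))).isInfix.trans h1
  have hsuf : replicate k c ++ [b] <:+: T :=
    (replicate_append_suffix_cons_replicate_append a' c [b]
      (hk.trans (min_le_right i j))).isInfix.trans h2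
  exact isMAW_cons_append_singleton hpre hsuf habs

theorem stmt14 {α : Type*} [DecidableEq α] (T : List α) (a a' b b' c : α)
    (i j : ℕ) (hi : 1 ≤ i) (hj : 1 ≤ j)
    (hac : a ≠ c) (hbc : b ≠ c) (hbb : b' ≠ b) (haa : a' ≠ a)
    (h1 : (a :: (List.replicate i c ++ [b'])) <:+: T)
    (h2 : (a' :: (List.replicate j c ++ [b])) <:+: T)
    (hcomb : ¬ (a :: (List.replicate (min i j) c ++ [b])) <:+: T)
    (k : ℕ) (hk1 : 1 ≤ k) (hk : k ≤ min i j)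
    (habs : ¬ (a :: (List.replicate k c ++ [b])) <:+: T) :
    IsMAW (a :: (List.replicate k c ++ [b])) T :=
  stmt14_general T a a' b b' c i j h1 h2 k hk habs
end
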